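/- Assume n ≥ 2, every component type I k has at least two elements, and f : In → O is distributed data-minimal. Then φ_dm is semantically gray-box monitorable for satisfaction in Sys f — that is, every finite U ⊆ graph f has a finite V with U ⊆ V ⊆ graph f such that V permanently satisfies φ_dm in Sys f — if and only if the input type In is finite. -/

import Mathlib

/-!
If the input space is finite, the whole graph of `f` is a finite monitor set, and it satisfies
`φ_dm` because distributed data-minimality provides exactly the witnesses `φ_dm` asks for.
If some component `I i` is infinite, every finite `V` misses two values `x ≠ x'` in coordinate `i`.
Adding to `V` two points of the graph with these `i`-th coordinates that also differ in a second
coordinate `j` breaks `φ_dm`: the only candidate witnesses are the two new points themselves,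
and they disagree off `i`.
-/

/-- A set `T` of input/output traces satisfies the distributed-data-minimality
hyperproperty `φ_dm`. -/
def PhiDM {n : ℕ} {I : Fin n → Type*} {O : Type*}
    (T : Set ((∀ k, I k) × O)) : Prop :=
  ∀ i : Fin n, ∀ u ∈ T, ∀ u' ∈ T, u.1 i ≠ u'.1 i →
    ∃ v ∈ T, ∃ v' ∈ T, v.1 i = u.1 i ∧ v'.1 i = u'.1 i ∧
      (∀ k, k ≠ i → v.1 k = v'.1 k) ∧ v.2 ≠ v'.2

/-- The function `f` is distributed data-minimal (DDM). -/
def DDM {n : ℕ} {I : Fin n → Type*} {O : Type*}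
    (f : (∀ k, I k) → O) : Prop :=
  ∀ i : Fin n, ∀ x y : I i, x ≠ y →
    ∃ z : ∀ k, I k, f (Function.update z i x) ≠ f (Function.update z i y)

/-- The graph of `f`: the set of its valid input/output pairs. -/
def graphOf {n : ℕ} {I : Fin n → Type*} {O : Type*}
    (f : (∀ k, I k) → O) : Set ((∀ k, I k) × O) :=
  {p | p.2 = f p.1}

section

variable {n : ℕ} {I : Fin n → Type*} {O : Type*}

theorem graphOf_finite [Finite (∀ k, I k)] (f : (∀ k, I k) → O) : (graphOf f).Finite :=
  (Set.finite_range fun x => (x, f x)).subset fun p hp => ⟨p.1, Prod.ext rfl hp.symm⟩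

theorem phiDM_graphOf {f : (∀ k, I k) → O} (hf : DDM f) : PhiDM (graphOf f) := by
  intro i u _ u' _ hu
  obtain ⟨z, hz⟩ := hf i (u.1 i) (u'.1 i) hu
  refine ⟨(_, f (Function.update z i (u.1 i))), rfl, (_, f (Function.update z i (u'.1 i))), rfl,
    Function.update_self .., Function.update_self ..,
    fun k hk => (Function.update_of_ne hk _ _).trans (Function.update_of_ne hk _ _).symm, hz⟩

theorem not_phiDM_insert_insert {T : Set ((∀ k, I k) × O)} {i : Fin n} {a a' : ∀ k, I k}
    {o o' : O} (ha : ∀ v ∈ T, v.1 i ≠ a i) (ha' : ∀ v ∈ T, v.1 i ≠ a' i) (hi : a i ≠ a' i)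
    {j : Fin n} (hji : j ≠ i) (hj : a j ≠ a' j) :
    ¬ PhiDM (insert (a, o) (insert (a', o') T)) := by
  intro hphi
  obtain ⟨v, hv, v', hv', hvi, hv'i, hoff, -⟩ :=
    hphi i (a, o) (Set.mem_insert _ _) (a', o')
      (Set.mem_insert_of_mem _ (Set.mem_insert _ _)) hi
  have hva : v.1 = a := by
    rcases hv with rfl | rfl | hv
    · rfl
    · exact absurd hvi.symm hi
    · exact absurd hvi (ha v hv)
  have hv'a' : v'.1 = a' := by
    rcases hv' with rfl | rfl | hv'
    · exact absurd hv'i hi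
    · rfl
    · exact absurd hv'i (ha' v' hv')
  exact hj (hva ▸ hv'a' ▸ hoff j hji)

theorem exists_not_phiDM_of_infinite [∀ k, Nonempty (I k)] {f : (∀ k, I k) → O}
    {V : Set ((∀ k, I k) × O)} (hV : V.Finite) (hVf : V ⊆ graphOf f) {i j : Fin n} (hji : j ≠ i)
    [Infinite (I i)] [Nontrivial (I j)] :
    ∃ B, V ⊆ B ∧ B ⊆ graphOf f ∧ ¬ PhiDM B := by
  obtain ⟨x, hx, x', hx', hxx'⟩ := (hV.image fun v => v.1 i).infinite_compl.nontrivial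
  obtain ⟨p, q, hpq⟩ := exists_pair_ne (I j)
  let z : ∀ k, I k := fun k => Classical.arbitrary _
  let a := Function.update (Function.update z j p) i x
  let a' := Function.update (Function.update z j q) i x'
  refine ⟨insert (a, f a) (insert (a', f a') V), ?_, ?_, ?_⟩
  · exact (Set.subset_insert _ _).trans (Set.subset_insert _ _)
  · rintro w (rfl | rfl | hw)
    exacts [rfl, rfl, hVf hw]
  · refine not_phiDM_insert_insert (fun v hv h => hx ⟨v, hv, ?_⟩) (fun v hv h => hx' ⟨v, hv, ?_⟩)
      ?_ hji ?_ <;> simp_all [a, a']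

end

theorem ddm_graybox_monitorable_for_satisfaction_iff_finite
    {n : ℕ} {I : Fin n → Type*} {O : Type*}
    (hn : 2 ≤ n) (hI : ∀ k : Fin n, ∃ x y : I k, x ≠ y)
    (f : (∀ k, I k) → O) (hf : DDM f) :
    (∀ U : Set ((∀ k, I k) × O), U.Finite → U ⊆ graphOf f →
      ∃ V : Set ((∀ k, I k) × O), U ⊆ V ∧ V ⊆ graphOf f ∧ V.Finite ∧
        (∀ B : Set ((∀ k, I k) × O), V ⊆ B → B ⊆ graphOf f → PhiDM B))
    ↔ Finite (∀ k, I k) := by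
  have hnt : ∀ k, Nontrivial (I k) := fun k => nontrivial_iff.mpr (hI k)
  constructor
  · intro hmon
    by_contra hfin
    obtain ⟨i, hi⟩ : ∃ i, Infinite (I i) := by
      by_contra! hcomp
      exact hfin Pi.finite
    have : Nontrivial (Fin n) := Fin.nontrivial_iff_two_le.mpr hn
    obtain ⟨j, hji⟩ := exists_ne i
    obtain ⟨V, -, hVf, hV, hmonV⟩ := hmon ∅ Set.finite_empty (Set.empty_subset _)
    obtain ⟨B, hVB, hBf, hB⟩ := exists_not_phiDM_of_infinite hV hVf hji
    exact hB (hmonV B hVB hBf)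
  · intro _ U _ hU
    exact ⟨graphOf f, hU, subset_rfl, graphOf_finite f,
      fun B hB hBf => hBf.antisymm hB ▸ phiDM_graphOf hf⟩
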